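/- arXiv:1711.00908 — 6 statements merged into one kernel-verified Lean document; each statement's English description precedes it below -/
import Mathlib

section
/- Fix m ≥ 1, parameters p_1,…,p_m ∈ (0,1), and D ∈ ℕ. Put q_j = 1 − p_j, ρ_j = q_j/p_j, ΔS = ∏_{j=1}^m ρ_j, and S = Σ_{i=1}^m ∏_{j=1}^i ρ_j. Define probability mass functions ν_m, ν_{m−1}, …, ν_0 on ℕ by: ν_m is the point mass at D, and for j = m−1 down to 0, ν_j is obtained from ν_{j+1} by binding along the map taking ℓ ∈ ℕ to the ℓ-fold i.i.d. sum of γ(p_{j+1}). Then for every λ ≤ 0, Σ_{x∈ℕ} ν_0(x) e^{λx} = ( 1 + (e^λ − 1)·ΔS / (1 − (e^λ − 1)·S) )^D. -/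
/-- Mass function of `γ(p) = G - 1` where `G` is geometric with parameter `p`
on `{1,2,…}`: mass `p (1-p)^i` at `i ∈ ℕ`. -/
noncomputable def geomShiftPMF (p : ℝ) : ℕ → ℝ := fun i => p * (1 - p) ^ i

/-- Convolution of mass functions on `ℕ`. -/
def convPMF (f g : ℕ → ℝ) : ℕ → ℝ := fun n => ∑ k ∈ Finset.range (n + 1), f k * g (n - k)

/-- The `ℓ`-fold i.i.d. sum of a mass function `f` on `ℕ`: the `0`-fold sum is the
point mass at `0`, and the `(ℓ+1)`-fold sum is the convolution of `f` with the
`ℓ`-fold sum. -/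
def iterSumPMF (f : ℕ → ℝ) : ℕ → ℕ → ℝ
  | 0 => fun n => if n = 0 then 1 else 0
  | ℓ + 1 => convPMF f (iterSumPMF f ℓ)

/-- Binding a mass function `ν` on `ℕ` along the map taking `ℓ` to the `ℓ`-fold
i.i.d. sum of `f`. -/
noncomputable def bindIterSum (ν f : ℕ → ℝ) : ℕ → ℝ :=
  fun x => ∑' ℓ : ℕ, ν ℓ * iterSumPMF f ℓ x

/-- `nuSeq p m D i` is the mass function `ν_{m-i}` of the chain: `ν_m` is the point
mass at `D`, and `ν_j` is obtained from `ν_{j+1}` by binding along the map taking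
`ℓ` to the `ℓ`-fold i.i.d. sum of `γ(p_{j+1})`.  In particular `nuSeq p m D m = ν_0`. -/
noncomputable def nuSeq (p : ℕ → ℝ) (m D : ℕ) : ℕ → ℕ → ℝ
  | 0 => fun x => if x = D then 1 else 0
  | i + 1 => bindIterSum (nuSeq p m D i) (geomShiftPMF (p (m - i)))

/-! ### Auxiliary lemmas -/

lemma geomShift_nonneg {p : ℝ} (hp : p ∈ Set.Ioo (0:ℝ) 1) (i : ℕ) : 0 ≤ geomShiftPMF p i := by
  obtain ⟨h1, h2⟩ := hp
  unfold geomShiftPMF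
  have : (0:ℝ) ≤ 1 - p := by linarith
  positivity

lemma geomShift_summable {p : ℝ} (hp : p ∈ Set.Ioo (0:ℝ) 1) {z : ℝ} (hz : z ∈ Set.Ioc (0:ℝ) 1) :
    Summable (fun i => geomShiftPMF p i * z ^ i) := by
  have h1 : ∀ i : ℕ, geomShiftPMF p i * z ^ i = p * ((1-p)*z) ^ i := by
    intro i; simp [geomShiftPMF, mul_pow]; ring
  simp_rw [h1]
  apply Summable.mul_left
  apply summable_geometric_of_lt_one (by nlinarith [hp.1, hp.2, hz.1, hz.2])
  nlinarith [hp.1, hp.2, hz.1, hz.2]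

lemma geomShift_tsum {p : ℝ} (hp : p ∈ Set.Ioo (0:ℝ) 1) {z : ℝ} (hz : z ∈ Set.Ioc (0:ℝ) 1) :
    ∑' i, geomShiftPMF p i * z ^ i = p / (1 - (1 - p) * z) := by
  have h1 : ∀ i : ℕ, geomShiftPMF p i * z ^ i = p * ((1-p)*z) ^ i := by
    intro i; simp [geomShiftPMF, mul_pow]; ring
  rw [tsum_congr h1, tsum_mul_left, tsum_geometric_of_lt_one (by nlinarith [hp.1, hp.2, hz.1, hz.2])
    (by nlinarith [hp.1, hp.2, hz.1, hz.2])]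
  rw [div_eq_mul_inv]

lemma fgeom_mem {p : ℝ} (hp : p ∈ Set.Ioo (0:ℝ) 1) {z : ℝ} (hz : z ∈ Set.Ioc (0:ℝ) 1) :
    p / (1 - (1 - p) * z) ∈ Set.Ioc (0:ℝ) 1 := by
  obtain ⟨hp0, hp1⟩ := hp; obtain ⟨hz0, hz1⟩ := hz
  have hd : 0 < 1 - (1-p)*z := by nlinarith
  constructor
  · positivity
  · rw [div_le_one hd]; nlinarith

lemma conv_nonneg' {f g : ℕ → ℝ} (hf : ∀ n, 0 ≤ f n) (hg : ∀ n, 0 ≤ g n) (n : ℕ) :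
    0 ≤ convPMF f g n :=
  Finset.sum_nonneg fun k _ => mul_nonneg (hf k) (hg _)

lemma iter_nonneg {f : ℕ → ℝ} (hf : ∀ n, 0 ≤ f n) (ℓ : ℕ) (x : ℕ) :
    0 ≤ iterSumPMF f ℓ x := by
  induction ℓ generalizing x with
  | zero => simp only [iterSumPMF]; split <;> norm_num
  | succ ℓ ih => exact conv_nonneg' hf ih x

lemma conv_mul_pow {f g : ℕ → ℝ} {z : ℝ} (n : ℕ) :
    convPMF f g n * z ^ n = ∑ k ∈ Finset.range (n+1), (f k * z ^ k) * (g (n-k) * z ^ (n-k)) := by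
  rw [convPMF, Finset.sum_mul]
  refine Finset.sum_congr rfl fun k hk => ?_
  have hkn : k ≤ n := Nat.lt_succ_iff.mp (Finset.mem_range.mp hk)
  rw [show f k * g (n-k) * z ^ n = f k * z ^ k * (g (n-k) * z ^ (n-k)) by
    rw [← Nat.add_sub_cancel' hkn, pow_add]; ring_nf; rw [Nat.add_sub_cancel_left]]

lemma conv_mgf {f g : ℕ → ℝ} {z : ℝ}
    (hsf : Summable (fun n => f n * z ^ n)) (hsg : Summable (fun n => g n * z ^ n)) :
    Summable (fun n => convPMF f g n * z ^ n) ∧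
      ∑' n, convPMF f g n * z ^ n = (∑' n, f n * z ^ n) * (∑' n, g n * z ^ n) := by
  have hnf : Summable (fun n => ‖f n * z ^ n‖) := summable_norm_iff.mpr hsf
  have hng : Summable (fun n => ‖g n * z ^ n‖) := summable_norm_iff.mpr hsg
  have hs := (summable_norm_sum_mul_range_of_summable_norm hnf hng).of_norm
  have ht := tsum_mul_tsum_eq_tsum_sum_range_of_summable_norm hnf hng
  constructor
  · exact hs.congr fun n => (conv_mul_pow n).symm
  · rw [tsum_congr (fun n => conv_mul_pow (f := f) (g := g) (z := z) n), ← ht]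

lemma iter_mgf {f : ℕ → ℝ} {z : ℝ}
    (hsf : Summable (fun n => f n * z ^ n)) (ℓ : ℕ) :
    Summable (fun n => iterSumPMF f ℓ n * z ^ n) ∧
      ∑' n, iterSumPMF f ℓ n * z ^ n = (∑' n, f n * z ^ n) ^ ℓ := by
  induction ℓ with
  | zero =>
    have he : ∀ n : ℕ, iterSumPMF f 0 n * z ^ n = if n = 0 then 1 else 0 := by
      intro n; simp only [iterSumPMF]; split <;> simp_all
    constructor
    · refine (summable_of_ne_finset_zero (s := {0}) ?_).congr fun n => (he n).symm
      intro n hn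
      simp only [Finset.mem_singleton] at hn
      simp [hn]
    · rw [tsum_congr he, tsum_ite_eq, pow_zero]
  | succ ℓ ih =>
    have h := conv_mgf hsf ih.1
    exact ⟨h.1, by rw [show iterSumPMF f (ℓ+1) = convPMF f (iterSumPMF f ℓ) from rfl,
      h.2, ih.2, pow_succ]; ring⟩

lemma bind_mgf {ν f : ℕ → ℝ} {z : ℝ} (hz : 0 ≤ z)
    (hν : ∀ ℓ, 0 ≤ ν ℓ) (hf : ∀ n, 0 ≤ f n)
    (hsf : Summable fun n => f n * z ^ n)
    (hsν : Summable fun ℓ => ν ℓ * (∑' n, f n * z ^ n) ^ ℓ) :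
    Summable (fun x => bindIterSum ν f x * z ^ x) ∧
      ∑' x, bindIterSum ν f x * z ^ x = ∑' ℓ, ν ℓ * (∑' n, f n * z ^ n) ^ ℓ := by
  set φ := ∑' n, f n * z ^ n with hφ
  set F2 : ℕ × ℕ → ℝ := fun q => ν q.1 * (iterSumPMF f q.1 q.2 * z ^ q.2) with hF2def
  have hpos : 0 ≤ F2 := fun q =>
    mul_nonneg (hν _) (mul_nonneg (iter_nonneg hf _ _) (pow_nonneg hz _))
  have htsum_row : ∀ ℓ, ∑' x, F2 (ℓ, x) = ν ℓ * φ ^ ℓ := by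
    intro ℓ
    simp only [hF2def]
    rw [tsum_mul_left, (iter_mgf hsf ℓ).2]
  have hF2 : Summable F2 := by
    refine (summable_prod_of_nonneg hpos).mpr ⟨fun ℓ => ?_, ?_⟩
    · exact ((iter_mgf hsf ℓ).1).mul_left (ν ℓ)
    · exact hsν.congr fun ℓ => (htsum_row ℓ).symm
  have hswap : Summable (fun q : ℕ × ℕ => F2 q.swap) := hF2.prod_symm
  have hcol : Summable fun x => ∑' ℓ, F2 (ℓ, x) :=
    ((summable_prod_of_nonneg (fun q => hpos q.swap)).mp hswap).2
  have hbind : ∀ x, bindIterSum ν f x * z ^ x = ∑' ℓ, F2 (ℓ, x) := by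
    intro x
    rw [bindIterSum, ← tsum_mul_right]
    exact tsum_congr fun ℓ => by simp only [hF2def]; ring
  constructor
  · exact hcol.congr fun x => (hbind x).symm
  · rw [tsum_congr hbind]
    rw [show (∑' (x : ℕ) (ℓ : ℕ), F2 (ℓ, x)) = ∑' (ℓ : ℕ) (x : ℕ), F2 (ℓ, x) from
      Summable.tsum_comm (f := fun ℓ x => F2 (ℓ, x)) hF2]
    exact tsum_congr htsum_row

lemma bind_nonneg {ν f : ℕ → ℝ} (hν : ∀ ℓ, 0 ≤ ν ℓ) (hf : ∀ n, 0 ≤ f n) (x : ℕ) :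
    0 ≤ bindIterSum ν f x :=
  tsum_nonneg fun ℓ => mul_nonneg (hν ℓ) (iter_nonneg hf ℓ x)

/-- The recursive closed form: `Ffun p m i z` is the composition
`f_m ∘ f_{m-1} ∘ ⋯ ∘ f_{m-i+1}` (innermost applied first to `z`). -/
noncomputable def Ffun (p : ℕ → ℝ) (m : ℕ) : ℕ → ℝ → ℝ
  | 0 => fun z => z
  | i + 1 => fun z => Ffun p m i (p (m - i) / (1 - (1 - p (m - i)) * z))

lemma Icc_eq_insert {a b : ℕ} (h : a ≤ b) :
    Finset.Icc a b = insert a (Finset.Icc (a+1) b) := by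
  ext x; simp only [Finset.mem_Icc, Finset.mem_insert]; omega

lemma Ffun_eq_form (m : ℕ) (hm : 1 ≤ m) (p : ℕ → ℝ)
    (hp : ∀ j, 1 ≤ j → j ≤ m → p j ∈ Set.Ioo (0:ℝ) 1) :
    ∀ i, 1 ≤ i → i ≤ m → ∀ z ∈ Set.Ioc (0:ℝ) 1,
    Ffun p m i z = 1 + (z-1) * (∏ j ∈ Finset.Icc (m-i+1) m, (1-p j)/p j) /
      (1 - (z-1) * ∑ k ∈ Finset.Icc (m-i+1) m, ∏ j ∈ Finset.Icc (m-i+1) k, (1-p j)/p j) := by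
  intro i hi1
  induction i, hi1 using Nat.le_induction with
  | base =>
    intro _ z hz
    have hmm : m - 1 + 1 = m := by omega
    rw [hmm]
    have h0 : Ffun p m 1 z = p m / (1 - (1 - p m) * z) := by
      simp [Ffun]
    rw [h0]
    simp only [Finset.Icc_self, Finset.sum_singleton, Finset.prod_singleton]
    obtain ⟨hp0, hp1⟩ := hp m hm le_rfl
    obtain ⟨hz0, hz1⟩ := hz
    have hdz : 0 < 1 - (1 - p m) * z := by nlinarith
    have h1p : (0:ℝ) ≤ 1 - p m := by linarith
    have hd2 : 0 < 1 - (z - 1) * ((1 - p m) / p m) := by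
      have : (z - 1) * ((1 - p m) / p m) ≤ 0 :=
        mul_nonpos_of_nonpos_of_nonneg (by linarith) (by positivity)
      linarith
    have key : 1 - (z - 1) * ((1 - p m) / p m) = (1 - (1 - p m) * z) / p m := by
      field_simp
      ring
    have e : (z - 1) * ((1 - p m) / p m) / ((1 - (1 - p m) * z) / p m)
        = (z - 1) * (1 - p m) / (1 - (1 - p m) * z) := by
      rw [div_eq_div_iff (by positivity) hdz.ne']
      field_simp
    rw [key, e, div_eq_iff hdz.ne']
    rw [add_mul, div_mul_cancel₀ _ hdz.ne']
    ring
  | succ i hi ih =>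
    intro him z hz
    have hii : i ≤ m := by omega
    set a := m - i with ha
    have ha1 : 1 ≤ a := by omega
    have ham : a ≤ m := by omega
    obtain ⟨hp0, hp1⟩ := hp a ha1 ham
    obtain ⟨hz0, hz1⟩ := hz
    set q : ℝ := 1 - p a with hq
    have hq0 : 0 < q := by simp [hq]; linarith
    have hdz : 0 < 1 - q * z := by nlinarith
    set u : ℝ := p a / (1 - q * z) with hu
    have hu_mem : u ∈ Set.Ioc (0:ℝ) 1 := by
      constructor
      · positivity
      · rw [hu, div_le_one hdz]; nlinarith
    have h0 : Ffun p m (i+1) z = Ffun p m i u := rfl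
    rw [h0, ih hii u hu_mem]
    set ΔS : ℝ := ∏ j ∈ Finset.Icc (a+1) m, (1 - p j) / p j with hΔS
    set S : ℝ := ∑ k ∈ Finset.Icc (a+1) m, ∏ j ∈ Finset.Icc (a+1) k, (1 - p j) / p j with hS
    have hseg : m - i + 1 = a + 1 := by omega
    have hseg2 : m - (i+1) + 1 = a := by omega
    rw [hseg2]
    have hrho : ∀ j, a + 1 ≤ j → j ≤ m → 0 ≤ (1 - p j) / p j := by
      intro j h1 h2
      obtain ⟨u1, u2⟩ := hp j (by omega) h2
      have : 0 ≤ 1 - p j := by linarith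
      positivity
    have hΔS0 : 0 ≤ ΔS := Finset.prod_nonneg fun j hj => by
      exact hrho j (Finset.mem_Icc.mp hj).1 (Finset.mem_Icc.mp hj).2
    have hS0 : 0 ≤ S := Finset.sum_nonneg fun k hk =>
      Finset.prod_nonneg fun j hj => hrho j (Finset.mem_Icc.mp hj).1
        (le_trans (Finset.mem_Icc.mp hj).2 (Finset.mem_Icc.mp hk).2)
    set w : ℝ := z - 1 with hw
    have hw0 : w ≤ 0 := by simp [hw]; linarith
    have hAnotmem : a ∉ Finset.Icc (a+1) m := by simp
    have hprod_new : (∏ j ∈ Finset.Icc a m, (1 - p j) / p j) = (q / p a) * ΔS := by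
      rw [Icc_eq_insert ham, Finset.prod_insert hAnotmem, hΔS, hq]
    have hsum_new : (∑ k ∈ Finset.Icc a m, ∏ j ∈ Finset.Icc a k, (1 - p j) / p j)
        = (q / p a) * (1 + S) := by
      rw [Icc_eq_insert ham, Finset.sum_insert hAnotmem, Finset.Icc_self,
        Finset.prod_singleton]
      have : ∀ k ∈ Finset.Icc (a+1) m, (∏ j ∈ Finset.Icc a k, (1 - p j) / p j)
          = (q / p a) * ∏ j ∈ Finset.Icc (a+1) k, (1 - p j) / p j := by
        intro k hk
        have hak : a ≤ k := by
          have := (Finset.mem_Icc.mp hk).1; omega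
        rw [Icc_eq_insert hak, Finset.prod_insert (by simp), hq]
      rw [Finset.sum_congr rfl this, ← Finset.mul_sum, ← hS, hq]
      ring
    rw [hprod_new, hsum_new]
    have hu1 : u - 1 = q * w / (1 - q * z) := by
      rw [hu, hw, div_sub' hdz.ne', hq]
      ring
    have hden : 0 < 1 - q * z - q * w * S := by nlinarith [mul_nonneg hq0.le hS0]
    have hA : 1 - (u - 1) * S = (1 - q * z - q * w * S) / (1 - q * z) := by
      rw [hu1]; field_simp
    have hB : 1 - w * ((q / p a) * (1 + S)) = (1 - q * z - q * w * S) / p a := by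
      rw [eq_div_iff hp0.ne', hq, hw]
      field_simp
      ring
    have hC : (u - 1) * ΔS = q * w * ΔS / (1 - q * z) := by rw [hu1]; ring
    rw [hA, hB, hC]
    have e1 : (q * w * ΔS / (1 - q * z)) / ((1 - q * z - q * w * S) / (1 - q * z))
        = q * w * ΔS / (1 - q * z - q * w * S) := by
      field_simp
    have e2 : w * ((q / p a) * ΔS) / ((1 - q * z - q * w * S) / p a)
        = q * w * ΔS / (1 - q * z - q * w * S) := by
      field_simp [hden.ne']
    rw [e1, e2]

lemma nu_mgf (m : ℕ) (p : ℕ → ℝ)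
    (hp : ∀ j, 1 ≤ j → j ≤ m → p j ∈ Set.Ioo (0:ℝ) 1) (D : ℕ) :
    ∀ i, i ≤ m → (∀ x, 0 ≤ nuSeq p m D i x) ∧
      ∀ z ∈ Set.Ioc (0:ℝ) 1, Summable (fun x => nuSeq p m D i x * z ^ x) ∧
        ∑' x, nuSeq p m D i x * z ^ x = (Ffun p m i z) ^ D := by
  intro i
  induction i with
  | zero =>
    intro _
    constructor
    · intro x; simp only [nuSeq]; split <;> norm_num
    · intro z hz
      have he : ∀ x : ℕ, nuSeq p m D 0 x * z ^ x = if x = D then z ^ D else 0 := by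
        intro x
        simp only [nuSeq]
        split
        · rename_i h; simp [h]
        · simp
      constructor
      · refine (summable_of_ne_finset_zero (s := {D}) ?_).congr fun x => (he x).symm
        intro x hx
        simp only [Finset.mem_singleton] at hx
        simp [hx]
      · rw [tsum_congr he, tsum_ite_eq]
        rfl
  | succ i ih =>
    intro him
    obtain ⟨hnn, hmgf⟩ := ih (by omega)
    have hj := hp (m - i) (by omega) (by omega)
    have hfnn : ∀ n, 0 ≤ geomShiftPMF (p (m-i)) n := geomShift_nonneg hj
    have hnn' : ∀ x, 0 ≤ nuSeq p m D (i+1) x := fun x => bind_nonneg hnn hfnn x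
    refine ⟨hnn', fun z hz => ?_⟩
    have hsf := geomShift_summable hj hz
    have hφ : (∑' n, geomShiftPMF (p (m-i)) n * z ^ n) = p (m-i) / (1 - (1 - p (m-i)) * z) :=
      geomShift_tsum hj hz
    have hu_mem : p (m-i) / (1 - (1 - p (m-i)) * z) ∈ Set.Ioc (0:ℝ) 1 := fgeom_mem hj hz
    obtain ⟨hsum_u, htsum_u⟩ := hmgf _ hu_mem
    have hsν : Summable fun ℓ =>
        nuSeq p m D i ℓ * (∑' n, geomShiftPMF (p (m-i)) n * z ^ n) ^ ℓ := by
      simp only [hφ]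
      exact hsum_u
    have hb := bind_mgf hz.1.le hnn hfnn hsf hsν
    have hns : nuSeq p m D (i+1) = bindIterSum (nuSeq p m D i) (geomShiftPMF (p (m-i))) := rfl
    rw [hns]
    refine ⟨hb.1, ?_⟩
    rw [hb.2]
    simp only [hφ]
    rw [htsum_u]
    rfl

/-- with `q_j = 1 - p_j`, `ρ_j = q_j / p_j`, `ΔS = ∏_{j=1}^m ρ_j`,
`S = Σ_{i=1}^m ∏_{j=1}^i ρ_j`, for every `λ ≤ 0`:
`Σ_x ν_0(x) e^{λ x} = (1 + (e^λ - 1) ΔS / (1 - (e^λ - 1) S))^D`. -/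
theorem geometric_branching_mgf
    (m : ℕ) (hm : 1 ≤ m) (p : ℕ → ℝ)
    (hp : ∀ j : ℕ, 1 ≤ j → j ≤ m → p j ∈ Set.Ioo (0 : ℝ) 1)
    (D : ℕ) (lam : ℝ) (hlam : lam ≤ 0) :
    ∑' x : ℕ, nuSeq p m D m x * Real.exp (lam * x) =
      (1 + (Real.exp lam - 1) * (∏ j ∈ Finset.Icc 1 m, (1 - p j) / p j) /
          (1 - (Real.exp lam - 1) *
            ∑ i ∈ Finset.Icc 1 m, ∏ j ∈ Finset.Icc 1 i, (1 - p j) / p j)) ^ D := by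
  have hz : Real.exp lam ∈ Set.Ioc (0:ℝ) 1 := by
    refine ⟨Real.exp_pos lam, ?_⟩
    calc Real.exp lam ≤ Real.exp 0 := Real.exp_le_exp.mpr hlam
    _ = 1 := Real.exp_zero
  have hrw : ∀ x : ℕ, nuSeq p m D m x * Real.exp (lam * x)
      = nuSeq p m D m x * (Real.exp lam) ^ x := by
    intro x
    rw [mul_comm lam, Real.exp_nat_mul]
  rw [tsum_congr hrw, ((nu_mgf m p hp D m le_rfl).2 _ hz).2,
    Ffun_eq_form m hm p hp m hm le_rfl _ hz]
  simp [Nat.sub_self]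
end

section
/- Let ΔS ∈ [0.99, 1.01] and S ≥ 100 be real numbers, let D ≥ 0, set λ₀ = log(1 − 1/(4S)), and let X be a nonnegative real random variable satisfying E[exp(λ₀ X)] ≤ ( 1 + (e^{λ₀} − 1)·ΔS / (1 − (e^{λ₀} − 1)·S) )^D. Then P( X < D/2 ) ≤ exp( −0.05·D/S ). -/
open MeasureTheory

/-- Chernoff lower-tail estimate.  If `ΔS ∈ [0.99, 1.01]`, `S ≥ 100`,
`D ≥ 0`, `λ₀ = log(1 - 1/(4S))`, and a nonnegative random variable `X` satisfies
`E[exp(λ₀ X)] ≤ (1 + (e^{λ₀} - 1) ΔS / (1 - (e^{λ₀} - 1) S))^D`, then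
`P(X < D/2) ≤ exp(-0.05 D / S)`. -/
theorem chernoff_lower_tail_geometric_chain
    {Ω : Type*} [MeasurableSpace Ω] (P : Measure Ω) [IsProbabilityMeasure P]
    (ΔS S D : ℝ) (hΔS : ΔS ∈ Set.Icc (0.99 : ℝ) 1.01) (hS : 100 ≤ S) (hD : 0 ≤ D)
    (lam₀ : ℝ) (hlam₀ : lam₀ = Real.log (1 - 1 / (4 * S)))
    (X : Ω → ℝ) (hXmeas : Measurable X) (hXnonneg : ∀ᵐ ω ∂P, 0 ≤ X ω)
    (hmgf : ∫ ω, Real.exp (lam₀ * X ω) ∂P ≤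
      (1 + (Real.exp lam₀ - 1) * ΔS / (1 - (Real.exp lam₀ - 1) * S)) ^ D) :
    P {ω | X ω < D / 2} ≤ ENNReal.ofReal (Real.exp (-0.05 * D / S)) := by
  obtain ⟨hΔ1, hΔ2⟩ := hΔS
  have hS0 : (0:ℝ) < S := by linarith
  have hy0 : (0:ℝ) < 1 - 1/(4*S) := by
    have : 1/(4*S) ≤ 1/400 := by
      apply one_div_le_one_div_of_le <;> linarith
    linarith
  have hy1 : 1 - 1/(4*S) < 1 := by
    have : (0:ℝ) < 1/(4*S) := by positivity
    linarith
  have hexp : Real.exp lam₀ = 1 - 1/(4*S) := by rw [hlam₀, Real.exp_log hy0]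
  have hlamneg : lam₀ < 0 := by
    rw [hlam₀]
    exact Real.log_neg hy0 hy1
  -- simplify the base
  have hbase : 1 + (Real.exp lam₀ - 1) * ΔS / (1 - (Real.exp lam₀ - 1) * S)
      = 1 - ΔS/(5*S) := by
    rw [hexp]
    field_simp
    ring
  set B : ℝ := 1 - ΔS/(5*S) with hBdef
  have hB0 : (0:ℝ) < B := by
    have : ΔS/(5*S) ≤ 1.01/500 := by
      apply div_le_div₀ (by norm_num) hΔ2 (by norm_num) (by linarith)
    have h0 : (0:ℝ) < ΔS/(5*S) := by positivity
    rw [hBdef]; linarith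
  -- log B ≤ -0.198/S
  have hlogB : Real.log B ≤ -0.198/S := by
    have h1 : Real.log B ≤ B - 1 := Real.log_le_sub_one_of_pos hB0
    have h2 : B - 1 = -(ΔS/(5*S)) := by rw [hBdef]; ring
    have h3 : 0.198/S ≤ ΔS/(5*S) := by
      rw [div_le_div_iff₀ hS0 (by linarith)]
      nlinarith
    rw [h2] at h1
    calc Real.log B ≤ -(ΔS/(5*S)) := h1
      _ ≤ -(0.198/S) := by linarith
      _ = -0.198/S := by ring
  -- -lam₀ ≤ 1/(4S-1)
  have hlamlb : -lam₀ ≤ 1/(4*S-1) := by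
    have h1 : Real.log (1/(1 - 1/(4*S))) ≤ 1/(1 - 1/(4*S)) - 1 :=
      Real.log_le_sub_one_of_pos (by positivity)
    rw [Real.log_div one_ne_zero (ne_of_gt hy0), Real.log_one] at h1
    have hne : 4*S - 1 ≠ 0 := by intro h; nlinarith
    have h2 : 1/(1 - 1/(4*S)) - 1 = 1/(4*S-1) := by
      field_simp
      ring
    rw [hlam₀]
    linarith [h1, h2.symm ▸ h1]
  -- key exponent inequality
  have hkey : Real.log B * D - lam₀ * (D/2) ≤ -0.05 * D / S := by
    have hexpo : Real.log B - lam₀/2 ≤ -0.05/S := by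
      have h4 : 1/(4*S-1) ≤ 1/399 := by
        apply one_div_le_one_div_of_le <;> linarith
      have h5 : (1:ℝ)/(2*(4*S-1)) ≤ 0.148/S := by
        rw [div_le_div_iff₀ (by linarith) hS0]
        nlinarith
      have : -lam₀/2 ≤ 0.148/S := by
        calc -lam₀/2 ≤ (1/(4*S-1))/2 := by linarith
          _ = 1/(2*(4*S-1)) := by rw [div_div]; ring_nf
          _ ≤ 0.148/S := h5
      have : Real.log B - lam₀/2 ≤ -0.198/S + 0.148/S := by linarith
      calc Real.log B - lam₀/2 ≤ -0.198/S + 0.148/S := this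
        _ = -0.05/S := by ring
    calc Real.log B * D - lam₀ * (D/2) = (Real.log B - lam₀/2) * D := by ring
      _ ≤ (-0.05/S) * D := by
          apply mul_le_mul_of_nonneg_right hexpo hD
      _ = -0.05 * D / S := by ring
  -- integrability of exp(lam₀ X)
  have hfmeas : Measurable fun ω => Real.exp (lam₀ * X ω) :=
    (Real.measurable_exp.comp (hXmeas.const_mul lam₀))
  have hfle1 : ∀ᵐ ω ∂P, Real.exp (lam₀ * X ω) ≤ 1 := by
    filter_upwards [hXnonneg] with ω hω
    rw [Real.exp_le_one_iff]
    exact mul_nonpos_of_nonpos_of_nonneg hlamneg.le hω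
  have hfint : Integrable (fun ω => Real.exp (lam₀ * X ω)) P := by
    apply Integrable.mono' (integrable_const (1:ℝ)) hfmeas.aestronglyMeasurable
    filter_upwards [hfle1] with ω hω
    rw [Real.norm_eq_abs, abs_of_pos (Real.exp_pos _)]
    exact hω
  set a : ℝ := Real.exp (lam₀ * (D/2)) with hadef
  have ha0 : 0 < a := Real.exp_pos _
  -- set inclusion
  have hsubset : {ω | X ω < D/2} ⊆ {ω | a ≤ Real.exp (lam₀ * X ω)} := by
    intro ω hω
    simp only [Set.mem_setOf_eq] at hω ⊢
    apply Real.exp_le_exp.mpr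
    exact mul_le_mul_of_nonpos_left hω.le hlamneg.le
  have hmarkov := mul_meas_ge_le_integral_of_nonneg
    (μ := P) (f := fun ω => Real.exp (lam₀ * X ω))
    (Filter.Eventually.of_forall fun ω => (Real.exp_pos _).le) hfint a
  have hmono : P {ω | X ω < D/2} ≤ P {ω | a ≤ Real.exp (lam₀ * X ω)} :=
    measure_mono hsubset
  have hfin1 : P {ω | X ω < D/2} ≠ ⊤ := measure_ne_top _ _
  have hfin2 : P {ω | a ≤ Real.exp (lam₀ * X ω)} ≠ ⊤ := measure_ne_top _ _
  have htoReal : (P {ω | X ω < D/2}).toReal ≤ Real.exp (-0.05 * D / S) := by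
    have h1 : (P {ω | X ω < D/2}).toReal ≤ (P {ω | a ≤ Real.exp (lam₀ * X ω)}).toReal :=
      ENNReal.toReal_mono hfin2 hmono
    have h2 : a * (P {ω | a ≤ Real.exp (lam₀ * X ω)}).toReal ≤ B ^ D := by
      calc a * (P {ω | a ≤ Real.exp (lam₀ * X ω)}).toReal
          ≤ ∫ ω, Real.exp (lam₀ * X ω) ∂P := hmarkov
        _ ≤ (1 + (Real.exp lam₀ - 1) * ΔS / (1 - (Real.exp lam₀ - 1) * S)) ^ D := hmgf
        _ = B ^ D := by rw [hbase]
    have hBD : B ^ D = Real.exp (Real.log B * D) := by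
      rw [Real.rpow_def_of_pos hB0]
    have h3 : (P {ω | a ≤ Real.exp (lam₀ * X ω)}).toReal ≤ B ^ D / a :=
      (le_div_iff₀ ha0).mpr (by linarith [h2, mul_comm a (P {ω | a ≤ Real.exp (lam₀ * X ω)}).toReal])
    have h4 : B ^ D / a = Real.exp (Real.log B * D - lam₀ * (D/2)) := by
      rw [hBD, hadef, Real.exp_sub]
    have h5 : B ^ D / a ≤ Real.exp (-0.05 * D / S) := by
      rw [h4]
      exact Real.exp_le_exp.mpr hkey
    linarith
  calc P {ω | X ω < D/2} = ENNReal.ofReal (P {ω | X ω < D/2}).toReal :=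
        (ENNReal.ofReal_toReal hfin1).symm
    _ ≤ ENNReal.ofReal (Real.exp (-0.05 * D / S)) := ENNReal.ofReal_le_ofReal htoReal
end

section
/- Let S ≥ 100 and ΔS ∈ [0.99, 1.01] be real numbers, set α = −1/(4S), and let D ≥ 0 be real. Then −(D/2)·log(1+α) + D·log(1 − α(S − ΔS)) − D·log(1 − αS) ≤ −0.05·D/S. -/
set_option maxHeartbeats 800000


/-- for `S ≥ 100`, `ΔS ∈ [0.99, 1.01]`, `α = -1/(4S)` and `D ≥ 0`:
`-(D/2) log(1+α) + D log(1 - α(S - ΔS)) - D log(1 - αS) ≤ -0.05 D / S`. -/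
theorem chernoff_core_inequality
    (S ΔS : ℝ) (hS : 100 ≤ S) (hΔS : ΔS ∈ Set.Icc (0.99 : ℝ) 1.01)
    (α : ℝ) (hα : α = -1 / (4 * S)) (D : ℝ) (hD : 0 ≤ D) :
    -(D / 2) * Real.log (1 + α) + D * Real.log (1 - α * (S - ΔS)) -
        D * Real.log (1 - α * S) ≤ -0.05 * D / S := by
  obtain ⟨hΔ1, hΔ2⟩ := hΔS
  have hS0 : (0:ℝ) < S := by linarith
  set x : ℝ := 1 / (4 * S) with hxdef
  have hx0 : 0 < x := by positivity
  have hx4 : x ≤ 1 / 400 := by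
    rw [hxdef]
    rw [div_le_div_iff₀ (by linarith) (by norm_num)]
    linarith
  have e1 : 1 + α = 1 - x := by rw [hα, hxdef]; ring
  have e2 : 1 - α * S = 5 / 4 := by
    rw [hα]; field_simp; ring
  have e3 : 1 - α * (S - ΔS) = (5/4) * (1 - (4/5) * ΔS * x) := by
    rw [hα, hxdef]; field_simp; ring
  have hx1 : 0 < 1 - x := by nlinarith
  have hc0 : 0 < 1 - (4/5) * ΔS * x := by nlinarith
  -- log bounds
  have hL1 : -Real.log (1 - x) ≤ x / (1 - x) := by
    have h := Real.log_le_sub_one_of_pos (x := (1 - x)⁻¹) (by positivity)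
    rw [Real.log_inv] at h
    have : (1 - x)⁻¹ - 1 = x / (1 - x) := by field_simp; ring
    linarith [this ▸ h]
  have hL2 : Real.log (1 - (4/5) * ΔS * x) ≤ -((4/5) * ΔS * x) := by
    have h := Real.log_le_sub_one_of_pos hc0
    linarith
  have hlog3 : Real.log (1 - α * (S - ΔS)) =
      Real.log (5/4) + Real.log (1 - (4/5) * ΔS * x) := by
    rw [e3, Real.log_mul (by norm_num) (ne_of_gt hc0)]
  have hrhs : -0.05 * D / S = -0.2 * D * x := by
    rw [hxdef]; field_simp; ring
  rw [e1, e2, hlog3, hrhs]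
  have key : -(D / 2) * Real.log (1 - x) + D * Real.log (1 - (4/5) * ΔS * x)
      ≤ -0.2 * D * x := by
    have b1 : -(D / 2) * Real.log (1 - x) ≤ (D / 2) * (x / (1 - x)) := by
      have := mul_le_mul_of_nonneg_left hL1 (by linarith : (0:ℝ) ≤ D / 2)
      linarith
    have b2 : D * Real.log (1 - (4/5) * ΔS * x) ≤ D * (-((4/5) * ΔS * x)) :=
      mul_le_mul_of_nonneg_left hL2 hD
    have b3 : (D / 2) * (x / (1 - x)) + D * (-((4/5) * ΔS * x)) ≤ -0.2 * D * x := by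
      have hd : x / (1 - x) ≤ (400/399) * x := by
        rw [div_le_iff₀ hx1]; nlinarith
      nlinarith [mul_nonneg hD hx0.le,
        mul_nonneg (mul_nonneg hD hx0.le) (by linarith : (0:ℝ) ≤ ΔS - 0.99),
        mul_le_mul_of_nonneg_left hd (by linarith : (0:ℝ) ≤ D / 2)]
    linarith
  linarith [key]
end

section
/- Let (Ω, F, P) be a probability space with a filtration F_0 ⊆ F_1 ⊆ ⋯ ⊆ F_m, let ξ_1,…,ξ_m be real random variables with each ξ_j measurable with respect to F_j and exp(ξ_j) integrable, and let E_1 ⊇ E_2 ⊇ ⋯ ⊇ E_m be events with E_j ∈ F_{j−1} for each j. Suppose ε ≥ 0 is such that for each j = 1,…,m, almost surely on E_j one has E[exp(ξ_j) | F_{j−1}] ≤ 1 + ε. Then E[ 1_{E_m} · exp( Σ_{j=1}^m ξ_j ) ] ≤ (1 + ε)^m. -/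
open MeasureTheory

/-- Core step: if `u ≥ 0` is `𝒢`-measurable, integrable, vanishing off `A`, and
`v ≥ 0` is integrable with `E[v|𝒢] ≤ 1+ε` a.e. on `A`, then `u*v` is integrable
with `∫ u v ≤ (1+ε) ∫ u`. -/
lemma core_step {Ω : Type*} {m0 : MeasurableSpace Ω} (P : Measure Ω) [IsProbabilityMeasure P]
    {𝒢 : MeasurableSpace Ω} (h𝒢 : 𝒢 ≤ m0)
    {u v : Ω → ℝ} (hu_meas : StronglyMeasurable[𝒢] u) (hu_nonneg : ∀ ω, 0 ≤ u ω)
    (hu_int : Integrable u P)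
    (hv_int : Integrable v P) (hv_nonneg : ∀ ω, 0 ≤ v ω)
    {A : Set Ω} (hA : ∀ ω, ω ∉ A → u ω = 0)
    {ε : ℝ} (hε : 0 ≤ ε) (hcond : ∀ᵐ ω ∂P, ω ∈ A → (P[v|𝒢]) ω ≤ 1 + ε) :
    Integrable (fun ω => u ω * v ω) P ∧
      ∫ ω, u ω * v ω ∂P ≤ (1 + ε) * ∫ ω, u ω ∂P := by
  set un : ℕ → Ω → ℝ := fun n ω => min (u ω) n with hun
  have hun_nonneg : ∀ n ω, 0 ≤ un n ω := fun n ω =>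
    le_min (hu_nonneg ω) (Nat.cast_nonneg n)
  have hun_meas : ∀ n, StronglyMeasurable[𝒢] (un n) :=
    fun n => (hu_meas.measurable.min (measurable_const)).stronglyMeasurable
  have hun_le : ∀ n ω, un n ω ≤ u ω := fun n ω => min_le_left _ _
  have hun_bdd : ∀ n ω, |un n ω| ≤ n := fun n ω => by
    rw [abs_of_nonneg (hun_nonneg n ω)]; exact min_le_right _ _
  -- each truncated product is integrable
  have hunv_int : ∀ n, Integrable (fun ω => un n ω * v ω) P := by
    intro n
    exact hv_int.bdd_mul ((hun_meas n).mono h𝒢).aestronglyMeasurable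
      (Filter.Eventually.of_forall fun ω => (Real.norm_eq_abs _).trans_le (hun_bdd n ω))
  -- bound each truncated integral
  have key : ∀ n, ∫ ω, un n ω * v ω ∂P ≤ (1 + ε) * ∫ ω, u ω ∂P := by
    intro n
    have hpull : P[fun ω => un n ω * v ω|𝒢] =ᵐ[P] fun ω => un n ω * (P[v|𝒢]) ω :=
      condExp_mul_of_stronglyMeasurable_left (hun_meas n) (hunv_int n) hv_int
    have h1 : ∫ ω, un n ω * v ω ∂P = ∫ ω, (P[fun ω => un n ω * v ω|𝒢]) ω ∂P :=
      (integral_condExp h𝒢).symm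
    have h2 : ∫ ω, (P[fun ω => un n ω * v ω|𝒢]) ω ∂P
        = ∫ ω, un n ω * (P[v|𝒢]) ω ∂P := integral_congr_ae hpull
    have hmul_int : Integrable (fun ω => un n ω * (P[v|𝒢]) ω) P := by
      exact (integrable_condExp : Integrable (P[v|𝒢]) P).bdd_mul
        ((hun_meas n).mono h𝒢).aestronglyMeasurable
        (Filter.Eventually.of_forall fun ω => (Real.norm_eq_abs _).trans_le (hun_bdd n ω))
    have h3 : ∫ ω, un n ω * (P[v|𝒢]) ω ∂P ≤ ∫ ω, (1 + ε) * un n ω ∂P := by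
      have hint2 : Integrable (fun ω => (1 + ε) * un n ω) P := by
        refine (hu_int.const_mul (1 + ε)).mono' (aestronglyMeasurable_const.mul
          ((hun_meas n).mono h𝒢).aestronglyMeasurable) ?_
        filter_upwards with ω
        rw [Real.norm_eq_abs, abs_mul, abs_of_nonneg (by linarith : (0:ℝ) ≤ 1 + ε),
          abs_of_nonneg (hun_nonneg n ω)]
        exact mul_le_mul_of_nonneg_left (hun_le n ω) (by linarith)
      refine integral_mono_ae hmul_int hint2 ?_
      filter_upwards [hcond] with ω hω
      by_cases hmem : ω ∈ A
      · calc un n ω * (P[v|𝒢]) ω ≤ un n ω * (1 + ε) :=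
            mul_le_mul_of_nonneg_left (hω hmem) (hun_nonneg n ω)
          _ = (1 + ε) * un n ω := mul_comm _ _
      · have : un n ω = 0 := by simp [hun, hA ω hmem, Nat.cast_nonneg]
        simp [this]
    have h4 : ∫ ω, (1 + ε) * un n ω ∂P ≤ (1 + ε) * ∫ ω, u ω ∂P := by
      rw [integral_const_mul]
      have hint_un : Integrable (un n) P := hu_int.mono'
        ((hun_meas n).mono h𝒢).aestronglyMeasurable
        (Filter.Eventually.of_forall fun ω => by
          rw [Real.norm_eq_abs, abs_of_nonneg (hun_nonneg n ω)]; exact hun_le n ω)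
      exact mul_le_mul_of_nonneg_left
        (integral_mono hint_un hu_int fun ω => hun_le n ω)
        (by linarith)
    linarith [h1, h2, h3, h4]
  -- monotone convergence to remove the truncation
  set C : ℝ := (1 + ε) * ∫ ω, u ω ∂P with hC
  have hC_nonneg : 0 ≤ C := mul_nonneg (by linarith) (integral_nonneg hu_nonneg)
  have h_mono : ∀ ω, Monotone fun n : ℕ => ENNReal.ofReal (un n ω * v ω) := by
    intro ω a b hab
    exact ENNReal.ofReal_le_ofReal (mul_le_mul_of_nonneg_right
      (min_le_min le_rfl (Nat.cast_le.mpr hab)) (hv_nonneg ω))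
  have h_tendsto : ∀ ω, Filter.Tendsto (fun n : ℕ => ENNReal.ofReal (un n ω * v ω))
      Filter.atTop (nhds (ENNReal.ofReal (u ω * v ω))) := by
    intro ω
    refine Filter.Tendsto.congr' ?_ tendsto_const_nhds
    filter_upwards [Filter.eventually_ge_atTop ⌈u ω⌉₊] with n hn
    have : un n ω = u ω := min_eq_left ((Nat.le_ceil (u ω)).trans (Nat.cast_le.mpr hn))
    rw [this]
  have h_sup : ∀ ω, (⨆ n : ℕ, ENNReal.ofReal (un n ω * v ω)) = ENNReal.ofReal (u ω * v ω) :=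
    fun ω => iSup_eq_of_tendsto (h_mono ω) (h_tendsto ω)
  have h_lint_eq : ∫⁻ ω, ENNReal.ofReal (u ω * v ω) ∂P
      = ⨆ n : ℕ, ∫⁻ ω, ENNReal.ofReal (un n ω * v ω) ∂P := by
    rw [← lintegral_iSup' (fun n => ((hunv_int n).1.aemeasurable.ennreal_ofReal))
      (Filter.Eventually.of_forall fun ω => h_mono ω)]
    exact lintegral_congr fun ω => (h_sup ω).symm
  have h_lint_le : ∫⁻ ω, ENNReal.ofReal (u ω * v ω) ∂P ≤ ENNReal.ofReal C := by
    rw [h_lint_eq]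
    refine iSup_le fun n => ?_
    rw [← ofReal_integral_eq_lintegral_ofReal (hunv_int n)
      (Filter.Eventually.of_forall fun ω => mul_nonneg (hun_nonneg n ω) (hv_nonneg ω))]
    exact ENNReal.ofReal_le_ofReal (key n)
  have h_meas : AEStronglyMeasurable[m0] (fun ω => u ω * v ω) P :=
    ((hu_meas.mono h𝒢).aestronglyMeasurable).mul hv_int.1
  have h_int : Integrable (fun ω => u ω * v ω) P := by
    refine ⟨h_meas, ?_⟩
    rw [hasFiniteIntegral_iff_ofReal
      (Filter.Eventually.of_forall fun ω => mul_nonneg (hu_nonneg ω) (hv_nonneg ω))]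
    exact h_lint_le.trans_lt ENNReal.ofReal_lt_top
  refine ⟨h_int, ?_⟩
  rw [integral_eq_lintegral_of_nonneg_ae
    (Filter.Eventually.of_forall fun ω => mul_nonneg (hu_nonneg ω) (hv_nonneg ω)) h_meas]
  calc (∫⁻ ω, ENNReal.ofReal (u ω * v ω) ∂P).toReal
      ≤ (ENNReal.ofReal C).toReal :=
        ENNReal.toReal_mono ENNReal.ofReal_ne_top h_lint_le
    _ = C := ENNReal.toReal_ofReal hC_nonneg

/-- iterated conditional exponential-moment bound.  With a filtration
`F_0 ⊆ ⋯ ⊆ F_m`, increments `ξ_j` that are `F_j`-measurable with `exp(ξ_j)`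
integrable, and a decreasing family of events `E_1 ⊇ ⋯ ⊇ E_m` with `E_j ∈ F_{j-1}`,
if almost surely on `E_j` one has `E[exp(ξ_j) | F_{j-1}] ≤ 1 + ε`, then
`E[1_{E_m} exp(Σ_{j=1}^m ξ_j)] ≤ (1 + ε)^m`. -/
theorem iterated_conditional_exponential_moment_bound
    {Ω : Type*} {m0 : MeasurableSpace Ω} (P : Measure Ω) [IsProbabilityMeasure P]
    (m : ℕ) (F : ℕ → MeasurableSpace Ω)
    (hF_le : ∀ j, j ≤ m → F j ≤ m0)
    (hF_mono : ∀ i j, i ≤ j → j ≤ m → F i ≤ F j)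
    (ξ : ℕ → Ω → ℝ)
    (hξ_meas : ∀ j, 1 ≤ j → j ≤ m → Measurable[F j] (ξ j))
    (hξ_int : ∀ j, 1 ≤ j → j ≤ m → Integrable (fun ω => Real.exp (ξ j ω)) P)
    (E : ℕ → Set Ω)
    (hE_anti : ∀ i j, 1 ≤ i → i ≤ j → j ≤ m → E j ⊆ E i)
    (hE_meas : ∀ j, 1 ≤ j → j ≤ m → MeasurableSet[F (j - 1)] (E j))
    (ε : ℝ) (hε : 0 ≤ ε)
    (hcond : ∀ j, 1 ≤ j → j ≤ m →
      ∀ᵐ ω ∂P, ω ∈ E j → (P[fun ω' => Real.exp (ξ j ω') | F (j - 1)]) ω ≤ 1 + ε) :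
    ∫ ω, (E m).indicator (fun ω' => Real.exp (∑ j ∈ Finset.Icc 1 m, ξ j ω')) ω ∂P ≤
      (1 + ε) ^ m := by
  rcases Nat.eq_zero_or_pos m with hm | hm
  · subst hm
    have hnn : ∀ ω, 0 ≤ (E 0).indicator
        (fun ω' => Real.exp (∑ j ∈ Finset.Icc 1 0, ξ j ω')) ω :=
      fun ω => Set.indicator_nonneg (fun _ _ => (Real.exp_pos _).le) ω
    have hle1 : ∀ ω, (E 0).indicator
        (fun ω' => Real.exp (∑ j ∈ Finset.Icc 1 0, ξ j ω')) ω ≤ 1 := by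
      intro ω
      by_cases h : ω ∈ E 0 <;>
        simp [Set.indicator_of_mem, Set.indicator_of_notMem, h]
    by_cases hint : Integrable (fun ω => (E 0).indicator
        (fun ω' => Real.exp (∑ j ∈ Finset.Icc 1 0, ξ j ω')) ω) P
    · calc ∫ ω, (E 0).indicator (fun ω' => Real.exp (∑ j ∈ Finset.Icc 1 0, ξ j ω')) ω ∂P
          ≤ ∫ _, (1 : ℝ) ∂P := integral_mono hint (integrable_const 1) hle1
        _ = 1 := by simp
        _ ≤ (1 + ε) ^ 0 := by norm_num
    · rw [integral_undef hint]
      positivity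
  -- main induction
  have main : ∀ k, 1 ≤ k → k ≤ m →
      Integrable (fun ω => (E k).indicator
        (fun ω' => Real.exp (∑ j ∈ Finset.Icc 1 k, ξ j ω')) ω) P ∧
      ∫ ω, (E k).indicator (fun ω' => Real.exp (∑ j ∈ Finset.Icc 1 k, ξ j ω')) ω ∂P
        ≤ (1 + ε) ^ k := by
    intro k
    induction k with
    | zero => intro h; omega
    | succ k IH =>
      intro _ hkm
      have hk_le : k ≤ m := Nat.le_of_succ_le hkm
      set u : Ω → ℝ := fun ω => (E (k+1)).indicator
        (fun ω' => Real.exp (∑ j ∈ Finset.Icc 1 k, ξ j ω')) ω with hu_def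
      have hEk1 : MeasurableSet[F k] (E (k+1)) := hE_meas (k+1) (by omega) hkm
      have hsum_meas : Measurable[F k]
          (fun ω' => Real.exp (∑ j ∈ Finset.Icc 1 k, ξ j ω')) := by
        refine Measurable.exp ?_
        refine Finset.measurable_sum _ fun j hj => ?_
        obtain ⟨hj1, hj2⟩ := Finset.mem_Icc.mp hj
        exact (hξ_meas j hj1 (hj2.trans hk_le)).mono (hF_mono j k hj2 hk_le) le_rfl
      have hu_meas : StronglyMeasurable[F k] u :=
        hsum_meas.stronglyMeasurable.indicator hEk1
      have hu_nonneg : ∀ ω, 0 ≤ u ω :=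
        fun ω => Set.indicator_nonneg (fun _ _ => (Real.exp_pos _).le) ω
      have hu_bound : Integrable u P ∧ ∫ ω, u ω ∂P ≤ (1 + ε) ^ k := by
        rcases Nat.eq_zero_or_pos k with hk0 | hk1
        · subst hk0
          have hle1 : ∀ ω, u ω ≤ 1 := by
            intro ω
            by_cases h : ω ∈ E 1 <;>
              simp [hu_def, Set.indicator_of_mem, Set.indicator_of_notMem, h]
          have hint : Integrable u P := (integrable_const (1:ℝ)).mono'
            ((hu_meas.mono (hF_le 0 hk_le)).aestronglyMeasurable)
            (Filter.Eventually.of_forall fun ω => by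
              rw [Real.norm_eq_abs, abs_of_nonneg (hu_nonneg ω)]; exact hle1 ω)
          refine ⟨hint, ?_⟩
          calc ∫ ω, u ω ∂P ≤ ∫ _, (1 : ℝ) ∂P := integral_mono hint (integrable_const 1) hle1
            _ = 1 := by simp
            _ ≤ (1 + ε) ^ 0 := by norm_num
        · obtain ⟨hint_f, hbound_f⟩ := IH hk1 hk_le
          have hle : ∀ ω, u ω ≤ (E k).indicator
              (fun ω' => Real.exp (∑ j ∈ Finset.Icc 1 k, ξ j ω')) ω := by
            intro ω
            by_cases h : ω ∈ E (k+1)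
            · have hk' : ω ∈ E k := hE_anti k (k+1) hk1 (Nat.le_succ k) hkm h
              simp [hu_def, Set.indicator_of_mem, h, hk']
            · simp only [hu_def, Set.indicator_of_notMem h]
              exact Set.indicator_nonneg (fun _ _ => (Real.exp_pos _).le) ω
          have hint : Integrable u P := hint_f.mono'
            ((hu_meas.mono (hF_le k hk_le)).aestronglyMeasurable)
            (Filter.Eventually.of_forall fun ω => by
              rw [Real.norm_eq_abs, abs_of_nonneg (hu_nonneg ω)]; exact hle ω)
          exact ⟨hint, le_trans (integral_mono hint hint_f hle) hbound_f⟩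
      have hcore := core_step P (hF_le k hk_le) hu_meas hu_nonneg hu_bound.1
        (hξ_int (k+1) (by omega) hkm) (fun ω => (Real.exp_pos _).le)
        (fun ω hω => Set.indicator_of_notMem hω _) hε
        (hcond (k+1) (by omega) hkm)
      have hfun : (fun ω => (E (k+1)).indicator
            (fun ω' => Real.exp (∑ j ∈ Finset.Icc 1 (k+1), ξ j ω')) ω)
          = fun ω => u ω * Real.exp (ξ (k+1) ω) := by
        funext ω
        by_cases h : ω ∈ E (k+1)
        · simp only [hu_def, Set.indicator_of_mem h,
            Finset.sum_Icc_succ_top (by omega : 1 ≤ k + 1), Real.exp_add]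
        · simp [hu_def, Set.indicator_of_notMem h]
      rw [hfun]
      refine ⟨hcore.1, hcore.2.trans ?_⟩
      calc (1 + ε) * ∫ ω, u ω ∂P ≤ (1 + ε) * (1 + ε) ^ k :=
            mul_le_mul_of_nonneg_left hu_bound.2 (by linarith)
        _ = (1 + ε) ^ (k + 1) := by ring
  exact (main m hm le_rfl).2
end

section
/- Let (Ω, F, P) be a probability space with a filtration F_0 ⊆ F_1 ⊆ ⋯ ⊆ F_m, let ξ_1,…,ξ_m be real random variables with each ξ_j measurable with respect to F_j, and let E_1 ⊇ E_2 ⊇ ⋯ ⊇ E_m be events with E_j ∈ F_{j−1} for each j. Suppose there exist constants a, b ≥ 0 and Λ > 0 such that for every λ ∈ [0, Λ] and each j = 1,…,m, almost surely on E_j one has E[exp(λ ξ_j) | F_{j−1}] ≤ 1 + aλ + bλ². Then for every r > 0 and every λ ∈ [0, Λ], P( E_m ∩ { Σ_{j=1}^m ξ_j ≥ r } ) ≤ exp( −λr + m(aλ + bλ²) ). -/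
open MeasureTheory

/-- Chebyshev–Chernoff estimate from iterated conditional moment
bounds.  With a filtration `F_0 ⊆ ⋯ ⊆ F_m`, adapted increments `ξ_j`, decreasing
events `E_1 ⊇ ⋯ ⊇ E_m` with `E_j ∈ F_{j-1}`, if for every `λ ∈ [0, Λ]` and each `j`
one has, almost surely on `E_j`, `E[exp(λ ξ_j) | F_{j-1}] ≤ 1 + aλ + bλ²`, then for
every `r > 0` and `λ ∈ [0, Λ]`:
`P(E_m ∩ {Σ_{j=1}^m ξ_j ≥ r}) ≤ exp(-λ r + m (a λ + b λ²))`. -/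
theorem chernoff_bound_of_conditional_mgf
    {Ω : Type*} {m0 : MeasurableSpace Ω} (P : Measure Ω) [IsProbabilityMeasure P]
    (m : ℕ) (F : ℕ → MeasurableSpace Ω)
    (hF_le : ∀ j, j ≤ m → F j ≤ m0)
    (hF_mono : ∀ i j, i ≤ j → j ≤ m → F i ≤ F j)
    (ξ : ℕ → Ω → ℝ)
    (hξ_meas : ∀ j, 1 ≤ j → j ≤ m → Measurable[F j] (ξ j))
    (E : ℕ → Set Ω)
    (hE_anti : ∀ i j, 1 ≤ i → i ≤ j → j ≤ m → E j ⊆ E i)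
    (hE_meas : ∀ j, 1 ≤ j → j ≤ m → MeasurableSet[F (j - 1)] (E j))
    (a b Λ : ℝ) (ha : 0 ≤ a) (hb : 0 ≤ b) (hΛ : 0 < Λ)
    (hint : ∀ lam ∈ Set.Icc (0 : ℝ) Λ, ∀ j, 1 ≤ j → j ≤ m →
      Integrable (fun ω => Real.exp (lam * ξ j ω)) P)
    (hcond : ∀ lam ∈ Set.Icc (0 : ℝ) Λ, ∀ j, 1 ≤ j → j ≤ m →
      ∀ᵐ ω ∂P, ω ∈ E j →
        (P[fun ω' => Real.exp (lam * ξ j ω') | F (j - 1)]) ω ≤ 1 + a * lam + b * lam ^ 2)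
    (r : ℝ) (hr : 0 < r) (lam : ℝ) (hlam : lam ∈ Set.Icc (0 : ℝ) Λ) :
    P (E m ∩ {ω | r ≤ ∑ j ∈ Finset.Icc 1 m, ξ j ω}) ≤
      ENNReal.ofReal (Real.exp (-lam * r + m * (a * lam + b * lam ^ 2))) := by
  classical
  obtain ⟨hlam0, hlamΛ⟩ := hlam
  set C : ℝ := 1 + a * lam + b * lam ^ 2 with hC_def
  have hC1 : (1 : ℝ) ≤ C := by nlinarith
  have hC0 : (0 : ℝ) ≤ C := by linarith
  rcases Nat.eq_zero_or_pos m with hm0 | hm0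
  · subst hm0
    have hempty : {ω : Ω | r ≤ ∑ j ∈ Finset.Icc 1 0, ξ j ω} = ∅ := by
      ext ω
      simp [show Finset.Icc 1 0 = ∅ from Finset.Icc_eq_empty (by omega), hr.not_ge]
    rw [hempty, Set.inter_empty]
    simp
  -- the partial sums
  set S : ℕ → Ω → ℝ := fun k ω => ∑ j ∈ Finset.Icc 1 k, ξ j ω with hS_def
  have hS_meas : ∀ k, k ≤ m → Measurable[F k] (S k) := by
    intro k hk
    apply Finset.measurable_sum
    intro j hj
    rw [Finset.mem_Icc] at hj
    exact (hξ_meas j hj.1 (hj.2.trans hk)).mono (hF_mono j k hj.2 hk) le_rfl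
  set E' : ℕ → Set Ω := fun k => if k = 0 then Set.univ else E k with hE'_def
  have hE'_meas : ∀ k, k ≤ m → MeasurableSet (E' k) := by
    intro k hk
    rcases Nat.eq_zero_or_pos k with h | h
    · simp [hE'_def, h]
    · simp only [hE'_def, if_neg h.ne']
      exact hF_le (k - 1) (by omega) _ (hE_meas k h hk)
  -- key induction
  have key : ∀ k, k ≤ m →
      ∫⁻ ω in E' k, ENNReal.ofReal (Real.exp (lam * S k ω)) ∂P ≤ (ENNReal.ofReal C) ^ k := by
    intro k
    induction k with
    | zero =>
      intro _
      have : ∀ ω : Ω, S 0 ω = 0 := by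
        intro ω
        simp [hS_def, show Finset.Icc 1 0 = ∅ from Finset.Icc_eq_empty (by omega)]
      simp [hE'_def, this]
    | succ k IH =>
      intro hk
      have hk' : k ≤ m := Nat.le_of_succ_le hk
      have IH' := IH hk'
      have hFk : F k ≤ m0 := hF_le k hk'
      have h1k : 1 ≤ k + 1 := by omega
      have hEmeas : MeasurableSet[F k] (E (k + 1)) := by
        have := hE_meas (k + 1) h1k hk
        simpa using this
      have hEsub : E (k + 1) ⊆ E' k := by
        rcases Nat.eq_zero_or_pos k with h | h
        · simp [hE'_def, h]
        · simpa [hE'_def, h.ne'] using hE_anti k (k + 1) h (by omega) hk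
      set g : Ω → ℝ := fun ω => Real.exp (lam * ξ (k + 1) ω) with hg_def
      have hg_int : Integrable g P := hint lam ⟨hlam0, hlamΛ⟩ (k + 1) h1k hk
      have hg_nn : ∀ ω, 0 ≤ g ω := fun ω => (Real.exp_pos _).le
      have hg_meas : Measurable g :=
        Real.measurable_exp.comp
          (((hξ_meas (k + 1) h1k hk).mono (hF_le (k + 1) hk) le_rfl).const_mul lam)
      have hcond' : ∀ᵐ ω ∂P, ω ∈ E (k + 1) → (P[g|F k]) ω ≤ C := by
        have := hcond lam ⟨hlam0, hlamΛ⟩ (k + 1) h1k hk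
        simpa using this
      set φ : Ω → ℝ := fun ω => Real.exp (lam * S k ω) with hφ_def
      have hφ_nn : ∀ ω, 0 ≤ φ ω := fun ω => (Real.exp_pos _).le
      have hφ_meas : Measurable[F k] φ :=
        Real.measurable_exp.comp ((hS_meas k hk').const_mul lam)
      set f : ℕ → Ω → ℝ :=
        fun N => (E (k + 1)).indicator (fun ω => min (φ ω) N) with hf_def
      have hf_meas : ∀ N : ℕ, Measurable[F k] (f N) := fun N =>
        (hφ_meas.min measurable_const).indicator hEmeas
      have hf_meas0 : ∀ N : ℕ, Measurable (f N) := fun N =>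
        (hf_meas N).mono hFk le_rfl
      have hf_nn : ∀ N ω, 0 ≤ f N ω := by
        intro N ω
        apply Set.indicator_nonneg
        intro x _
        exact le_min (hφ_nn x) (Nat.cast_nonneg N)
      have hf_le_phi : ∀ N ω, ω ∈ E (k + 1) → f N ω = min (φ ω) N := by
        intro N ω hω; simp [hf_def, hω]
      have hf_bound : ∀ N : ℕ, ∀ ω, ‖f N ω‖ ≤ (N : ℝ) := by
        intro N ω
        rw [Real.norm_eq_abs, abs_of_nonneg (hf_nn N ω)]
        by_cases hω : ω ∈ E (k + 1)
        · rw [hf_le_phi N ω hω]; exact min_le_right _ _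
        · simp [hf_def, hω]
      -- each truncated product has integral at most C^(k+1) in ENNReal
      have main : ∀ N : ℕ,
          ENNReal.ofReal (∫ ω, f N ω * g ω ∂P) ≤ (ENNReal.ofReal C) ^ (k + 1) := by
        intro N
        have hpull : P[fun ω => f N ω * g ω|F k] =ᵐ[P] fun ω => f N ω * (P[g|F k]) ω := by
          have := condExp_stronglyMeasurable_mul_of_bound hFk
            ((hf_meas N).stronglyMeasurable) hg_int (N : ℝ)
            (Filter.Eventually.of_forall (hf_bound N))
          exact this
        have hfN_int : Integrable (f N) P :=
          Integrable.mono' (integrable_const (N : ℝ))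
            (hf_meas0 N).aestronglyMeasurable
            (Filter.Eventually.of_forall (hf_bound N))
        have h_prod_cond_int : Integrable (fun ω => f N ω * (P[g|F k]) ω) P :=
          integrable_condExp.congr hpull
        have h_int_eq : ∫ ω, f N ω * g ω ∂P = ∫ ω, f N ω * (P[g|F k]) ω ∂P := by
          rw [← integral_condExp hFk]
          exact integral_congr_ae hpull
        have h_int_le : ∫ ω, f N ω * (P[g|F k]) ω ∂P ≤ ∫ ω, C * f N ω ∂P := by
          apply integral_mono_ae h_prod_cond_int (hfN_int.const_mul C)
          filter_upwards [hcond'] with ω hω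
          by_cases hωE : ω ∈ E (k + 1)
          · calc f N ω * (P[g|F k]) ω ≤ f N ω * C :=
                  mul_le_mul_of_nonneg_left (hω hωE) (hf_nn N ω)
              _ = C * f N ω := mul_comm _ _
          · simp [hf_def, hωE]
        have h_fN_lin : ENNReal.ofReal (∫ ω, f N ω ∂P) ≤ (ENNReal.ofReal C) ^ k := by
          rw [ofReal_integral_eq_lintegral_ofReal hfN_int
            (Filter.Eventually.of_forall (hf_nn N))]
          refine le_trans ?_ IH'
          rw [← lintegral_indicator (hE'_meas k hk')]
          apply lintegral_mono
          intro ω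
          by_cases hωE : ω ∈ E (k + 1)
          · have hωE' : ω ∈ E' k := hEsub hωE
            simp only [Set.indicator_of_mem hωE']
            exact ENNReal.ofReal_le_ofReal
              (by rw [hf_le_phi N ω hωE]; exact min_le_left _ _)
          · simp [hf_def, hωE]
        calc ENNReal.ofReal (∫ ω, f N ω * g ω ∂P)
            ≤ ENNReal.ofReal (∫ ω, C * f N ω ∂P) := by
              apply ENNReal.ofReal_le_ofReal
              rw [h_int_eq]; exact h_int_le
          _ = ENNReal.ofReal (C * ∫ ω, f N ω ∂P) := by rw [integral_const_mul]
          _ ≤ ENNReal.ofReal C * ENNReal.ofReal (∫ ω, f N ω ∂P) := by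
              rw [ENNReal.ofReal_mul hC0]
          _ ≤ ENNReal.ofReal C * (ENNReal.ofReal C) ^ k :=
              mul_le_mul_right h_fN_lin _
          _ = (ENNReal.ofReal C) ^ (k + 1) := (pow_succ' _ _).symm
      -- now pass to the limit
      have h_prod_int : ∀ N : ℕ, Integrable (fun ω => f N ω * g ω) P := fun N =>
        hg_int.bdd_mul (hf_meas0 N).aestronglyMeasurable (Filter.Eventually.of_forall (hf_bound N))
      have hsum_split : ∀ ω, S (k + 1) ω = S k ω + ξ (k + 1) ω := by
        intro ω
        simp only [hS_def]
        exact Finset.sum_Icc_succ_top h1k _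
      have h_decomp : ∀ ω, Real.exp (lam * S (k + 1) ω) = φ ω * g ω := by
        intro ω
        rw [hsum_split ω, mul_add, Real.exp_add]
      have h_sup : ∀ ω, (E (k + 1)).indicator (fun ω => ENNReal.ofReal (φ ω * g ω)) ω
          = ⨆ N : ℕ, ENNReal.ofReal (f N ω * g ω) := by
        intro ω
        by_cases hωE : ω ∈ E (k + 1)
        · rw [Set.indicator_of_mem hωE]
          apply le_antisymm
          · have : ENNReal.ofReal (φ ω * g ω)
                ≤ ENNReal.ofReal (f ⌈φ ω⌉₊ ω * g ω) := by
              apply ENNReal.ofReal_le_ofReal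
              rw [hf_le_phi _ ω hωE, min_eq_left (Nat.le_ceil _)]
            exact this.trans (le_iSup (fun N : ℕ => ENNReal.ofReal (f N ω * g ω)) ⌈φ ω⌉₊)
          · apply iSup_le
            intro N
            apply ENNReal.ofReal_le_ofReal
            rw [hf_le_phi N ω hωE]
            exact mul_le_mul_of_nonneg_right (min_le_left _ _) (hg_nn ω)
        · simp only [Set.indicator_of_notMem hωE]
          have : ∀ N : ℕ, f N ω = 0 := by intro N; simp [hf_def, hωE]
          simp [this]
      have h_mono : Monotone (fun N : ℕ => fun ω => ENNReal.ofReal (f N ω * g ω)) := by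
        intro N M hNM
        intro ω
        apply ENNReal.ofReal_le_ofReal
        apply mul_le_mul_of_nonneg_right _ (hg_nn ω)
        by_cases hωE : ω ∈ E (k + 1)
        · rw [hf_le_phi N ω hωE, hf_le_phi M ω hωE]
          exact min_le_min le_rfl (Nat.cast_le.mpr hNM)
        · simp [hf_def, hωE]
      calc ∫⁻ ω in E' (k + 1), ENNReal.ofReal (Real.exp (lam * S (k + 1) ω)) ∂P
          = ∫⁻ ω in E (k + 1), ENNReal.ofReal (φ ω * g ω) ∂P := by
            simp only [hE'_def, if_neg (Nat.succ_ne_zero k)]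
            apply lintegral_congr
            intro ω
            rw [h_decomp ω]
        _ = ∫⁻ ω, (E (k + 1)).indicator (fun ω => ENNReal.ofReal (φ ω * g ω)) ω ∂P := by
            rw [lintegral_indicator (hFk _ hEmeas)]
        _ = ∫⁻ ω, ⨆ N : ℕ, ENNReal.ofReal (f N ω * g ω) ∂P := by
            apply lintegral_congr
            intro ω
            exact h_sup ω
        _ = ⨆ N : ℕ, ∫⁻ ω, ENNReal.ofReal (f N ω * g ω) ∂P := by
            apply lintegral_iSup
            · intro N
              exact ((hf_meas0 N).mul hg_meas).ennreal_ofReal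
            · exact h_mono
        _ ≤ (ENNReal.ofReal C) ^ (k + 1) := by
            apply iSup_le
            intro N
            rw [← ofReal_integral_eq_lintegral_ofReal (h_prod_int N)
              (Filter.Eventually.of_forall (fun ω => mul_nonneg (hf_nn N ω) (hg_nn ω)))]
            exact main N
  -- Markov / Chernoff step
  have hkey := key m le_rfl
  have hE'm : E' m = E m := by simp [hE'_def, hm0.ne']
  rw [hE'm] at hkey
  set A : Set Ω := E m ∩ {ω | r ≤ S m ω} with hA_def
  have hSm_meas : Measurable (S m) := (hS_meas m le_rfl).mono (hF_le m le_rfl) le_rfl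
  have markov : ENNReal.ofReal (Real.exp (lam * r)) * P A
      ≤ ∫⁻ ω in A, ENNReal.ofReal (Real.exp (lam * S m ω)) ∂P := by
    rw [← setLIntegral_const A (ENNReal.ofReal (Real.exp (lam * r)))]
    apply setLIntegral_mono (hSm_meas.const_mul lam).exp.ennreal_ofReal
    intro ω hω
    apply ENNReal.ofReal_le_ofReal
    apply Real.exp_le_exp.mpr
    exact mul_le_mul_of_nonneg_left hω.2 hlam0
  have hA_le : ∫⁻ ω in A, ENNReal.ofReal (Real.exp (lam * S m ω)) ∂P
      ≤ (ENNReal.ofReal C) ^ m :=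
    le_trans (lintegral_mono_set Set.inter_subset_left) hkey
  have hc_pos : (0 : ENNReal) < ENNReal.ofReal (Real.exp (lam * r)) :=
    ENNReal.ofReal_pos.mpr (Real.exp_pos _)
  have hc_top : ENNReal.ofReal (Real.exp (lam * r)) ≠ ⊤ := ENNReal.ofReal_ne_top
  have hPA : P A ≤ (ENNReal.ofReal C) ^ m * ENNReal.ofReal (Real.exp (-(lam * r))) := by
    have h1 : P A * ENNReal.ofReal (Real.exp (lam * r))
        ≤ (ENNReal.ofReal C) ^ m := by
      rw [mul_comm]
      exact le_trans markov hA_le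
    have h2 : P A ≤ (ENNReal.ofReal C) ^ m / ENNReal.ofReal (Real.exp (lam * r)) :=
      (ENNReal.le_div_iff_mul_le (Or.inl hc_pos.ne') (Or.inl hc_top)).mpr h1
    refine h2.trans_eq ?_
    rw [div_eq_mul_inv, ← ENNReal.ofReal_inv_of_pos (Real.exp_pos _), ← Real.exp_neg]
  have hCexp : ENNReal.ofReal C ≤ ENNReal.ofReal (Real.exp (a * lam + b * lam ^ 2)) :=
    ENNReal.ofReal_le_ofReal (by
      have h := Real.add_one_le_exp (a * lam + b * lam ^ 2)
      rw [hC_def]; linarith)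
  calc P A ≤ (ENNReal.ofReal C) ^ m * ENNReal.ofReal (Real.exp (-(lam * r))) := hPA
    _ ≤ (ENNReal.ofReal (Real.exp (a * lam + b * lam ^ 2))) ^ m
          * ENNReal.ofReal (Real.exp (-(lam * r))) := by
        exact mul_le_mul_left (pow_le_pow_left' hCexp m) _
    _ = ENNReal.ofReal (Real.exp (-lam * r + m * (a * lam + b * lam ^ 2))) := by
        rw [← ENNReal.ofReal_pow (Real.exp_pos _).le, ← Real.exp_nat_mul,
          ← ENNReal.ofReal_mul (Real.exp_pos _).le, ← Real.exp_add]
        congr 1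
        ring
end

section
/- Let M and A be real random variables on a probability space with A ≥ 0 almost surely, and let λ > 0 and r > 0. Suppose E[ exp( λM − (λ²/2)·A ) ] ≤ 1. Then P( M > 2r ) ≤ e^{−λr} + P( A > 2r/λ ). -/
open MeasureTheory

/-- if `A ≥ 0` a.s. and `E[exp(λM - (λ²/2)A)] ≤ 1`, then
`P(M > 2r) ≤ e^{-λr} + P(A > 2r/λ)`. -/
theorem tail_bound_of_exponential_supermartingale
    {Ω : Type*} [MeasurableSpace Ω] (P : Measure Ω) [IsProbabilityMeasure P]
    (M A : Ω → ℝ) (hM : Measurable M) (hA : Measurable A)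
    (hAnonneg : ∀ᵐ ω ∂P, 0 ≤ A ω)
    (lam r : ℝ) (hlam : 0 < lam) (hr : 0 < r)
    (hexp : ∫⁻ ω, ENNReal.ofReal (Real.exp (lam * M ω - lam ^ 2 / 2 * A ω)) ∂P ≤ 1) :
    P {ω | M ω > 2 * r} ≤
      ENNReal.ofReal (Real.exp (-lam * r)) + P {ω | A ω > 2 * r / lam} := by
  set S : Set Ω := {ω | M ω > 2 * r ∧ A ω ≤ 2 * r / lam} with hS
  have hSmeas : MeasurableSet S :=
    (measurableSet_lt measurable_const hM).inter (measurableSet_le hA measurable_const)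
  have hsub : {ω | M ω > 2 * r} ⊆ S ∪ {ω | A ω > 2 * r / lam} := by
    intro ω hω
    by_cases h : A ω ≤ 2 * r / lam
    · exact Or.inl ⟨hω, h⟩
    · exact Or.inr (lt_of_not_ge h)
  have key : P S ≤ ENNReal.ofReal (Real.exp (-lam * r)) := by
    have hlow : ENNReal.ofReal (Real.exp (lam * r)) * P S ≤
        ∫⁻ ω, ENNReal.ofReal (Real.exp (lam * M ω - lam ^ 2 / 2 * A ω)) ∂P := by
      have : ∫⁻ ω in S, ENNReal.ofReal (Real.exp (lam * r)) ∂P ≤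
          ∫⁻ ω in S, ENNReal.ofReal (Real.exp (lam * M ω - lam ^ 2 / 2 * A ω)) ∂P := by
        refine setLIntegral_mono_ae (by measurability) ?_
        filter_upwards with ω hω
        apply ENNReal.ofReal_le_ofReal
        apply Real.exp_le_exp.2
        have h1 : lam * (2 * r) ≤ lam * M ω :=
          mul_le_mul_of_nonneg_left (le_of_lt hω.1) hlam.le
        have h2 : lam ^ 2 / 2 * A ω ≤ lam ^ 2 / 2 * (2 * r / lam) :=
          mul_le_mul_of_nonneg_left hω.2 (by positivity)
        have h3 : lam ^ 2 / 2 * (2 * r / lam) = lam * r := by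
          field_simp
        nlinarith
      calc ENNReal.ofReal (Real.exp (lam * r)) * P S
          = ∫⁻ ω in S, ENNReal.ofReal (Real.exp (lam * r)) ∂P := by
            rw [setLIntegral_const]
        _ ≤ ∫⁻ ω in S, ENNReal.ofReal (Real.exp (lam * M ω - lam ^ 2 / 2 * A ω)) ∂P := this
        _ ≤ ∫⁻ ω, ENNReal.ofReal (Real.exp (lam * M ω - lam ^ 2 / 2 * A ω)) ∂P :=
            setLIntegral_le_lintegral _ _
    have h1 : ENNReal.ofReal (Real.exp (lam * r)) * P S ≤ 1 := hlow.trans hexp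
    have hpos : (0 : ℝ) < Real.exp (lam * r) := Real.exp_pos _
    have h1' : P S * ENNReal.ofReal (Real.exp (lam * r)) ≤ 1 := by rwa [mul_comm] at h1
    have := (ENNReal.le_div_iff_mul_le (Or.inl (ENNReal.ofReal_pos.2 hpos).ne')
      (Or.inl ENNReal.ofReal_ne_top)).2 h1'
    calc P S ≤ 1 / ENNReal.ofReal (Real.exp (lam * r)) := this
      _ = ENNReal.ofReal (Real.exp (-lam * r)) := by
          rw [neg_mul, Real.exp_neg, ENNReal.ofReal_inv_of_pos hpos, one_div]
  calc P {ω | M ω > 2 * r} ≤ P (S ∪ {ω | A ω > 2 * r / lam}) := measure_mono hsub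
    _ ≤ P S + P {ω | A ω > 2 * r / lam} := measure_union_le _ _
    _ ≤ _ := add_le_add_left key _
end
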